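/- For the fully localized walk U_D(C_π) with π a 2d-cycle, propagation is completely suppressed: for any basis vector |τ,x⟩ and any n ∈ ℤ, the vector U_D(C_π)^n |τ,x⟩ is supported on lattice sites y with |y − x| ≤ 2d − 1 (max norm), uniformly in n. More generally any finitely supported initial state remains supported in a fixed finite set for all times. -/

import Mathlib

noncomputable section
open scoped InnerProductSpace ENNReal

/-- Coin index set, modeling I_± = {±1,…,±d}: a direction in `Fin d` and a sign. -/
abbrev Coin (d : ℕ) := Fin d × Bool

/-- The lattice ℤ^d (with the sup norm from the Pi instance). -/
abbrev Site (d : ℕ) := Fin d → ℤ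

/-- The Hilbert space ℂ^{2d} ⊗ ℓ²(ℤ^d), modeled as ℓ² over Coin d × ℤ^d. -/
abbrev WalkH (d : ℕ) := lp (fun _ : Coin d × Site d => ℂ) 2

/-- The jump function r(τ) = sign(τ) e_{|τ|}. -/
def jump (d : ℕ) (τ : Coin d) : Site d := (if τ.2 then (1 : ℤ) else -1) • Pi.single τ.1 1

/-- The canonical basis vector |τ, x⟩. -/
def bv (d : ℕ) (τ : Coin d) (x : Site d) : WalkH d := lp.single 2 (τ, x) 1

/-- The permutation coin matrix C_π = Σ_τ |π(τ)⟩⟨τ|. -/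
def permCoin (d : ℕ) (π : Equiv.Perm (Coin d)) : Matrix (Coin d) (Coin d) ℂ :=
  fun τ σ => if τ = π σ then 1 else 0

/-!
One step of the walk sends `|τ, x⟩` to a phase times `|π τ, x + r(π τ)⟩`, so `W ^ n |τ, x⟩` is a
phase times a single basis vector, displaced from `x` by `∑_{k=1}^{n} r(π^k τ)`. As `π` is a
`2d`-cycle these jumps are `2d`-periodic in `k`, and one period visits every coin once, where the
jumps `±e_i` cancel; so the displacement only depends on `n mod 2d` and has norm at most `2d - 1`.
Negative powers reduce to positive ones through `W⁻¹ = W†`, which also turns the claim about a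
finitely supported state into the claim about basis vectors.
-/

open Finset

theorem Function.Periodic.sum_range_eq_sum_range_mod {M : Type*} [AddCommMonoid M] {f : ℕ → M}
    {N : ℕ} (hf : Function.Periodic f N) (hsum : ∑ k ∈ range N, f k = 0) (n : ℕ) :
    ∑ k ∈ range n, f k = ∑ k ∈ range (n % N), f k := by
  have hshift : ∀ q m, ∑ k ∈ range m, f (q * N + k) = ∑ k ∈ range m, f k := fun q m =>
    sum_congr rfl fun k _ => by rw [add_comm]; exact hf.nat_mul q k
  have hfull : ∀ q, ∑ k ∈ range (q * N), f k = 0 := by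
    intro q
    induction q with
    | zero => simp
    | succ q ih => rw [Nat.succ_mul, sum_range_add, ih, hshift, hsum, add_zero]
  conv_lhs => rw [← Nat.div_add_mod' n N, sum_range_add, hfull, zero_add, hshift]

namespace Equiv.Perm

variable {α : Type*} [Fintype α] {π : Perm α}

theorem bijective_pow_apply_of_forall_exists_pow_apply_eq
    (hπ : ∀ σ τ : α, ∃ k < Fintype.card α, (π ^ k) τ = σ) (τ : α) :
    Function.Bijective fun k : Fin (Fintype.card α) => (π ^ (k : ℕ)) τ := by
  rw [Fintype.bijective_iff_surjective_and_card]
  refine ⟨fun σ => ?_, Fintype.card_fin _⟩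
  obtain ⟨k, hk, rfl⟩ := hπ σ τ
  exact ⟨⟨k, hk⟩, rfl⟩

theorem pow_card_eq_one_of_forall_exists_pow_apply_eq
    (hπ : ∀ σ τ : α, ∃ k < Fintype.card α, (π ^ k) τ = σ) : π ^ Fintype.card α = 1 := by
  ext τ
  obtain ⟨k, hk, hkτ⟩ := hπ τ (π τ)
  rw [← mul_apply, ← pow_succ] at hkτ
  -- `(π ^ (k + 1)) τ = (π ^ 0) τ`, so injectivity of the orbit map forces `k + 1 = card α`
  obtain hlt | heq := (Nat.succ_le_of_lt hk).lt_or_eq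
  · have := (bijective_pow_apply_of_forall_exists_pow_apply_eq hπ τ).injective
      (a₁ := ⟨k + 1, hlt⟩) (a₂ := ⟨0, k.zero_le.trans_lt hk⟩) (by simpa using hkτ)
    simp at this
  · rw [← heq]
    exact hkτ

theorem sum_range_card_pow_apply_of_forall_exists_pow_apply_eq {M : Type*} [AddCommMonoid M]
    (hπ : ∀ σ τ : α, ∃ k < Fintype.card α, (π ^ k) τ = σ) (f : α → M) (τ : α) :
    ∑ k ∈ range (Fintype.card α), f ((π ^ k) τ) = ∑ σ, f σ := by
  rw [← Fin.sum_univ_eq_sum_range fun k => f ((π ^ k) τ)]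
  exact Fintype.sum_bijective _ (bijective_pow_apply_of_forall_exists_pow_apply_eq hπ τ) _ _
    fun _ => rfl

end Equiv.Perm

theorem inner_unitary_apply_right {𝕜 E : Type*} [RCLike 𝕜] [NormedAddCommGroup E]
    [InnerProductSpace 𝕜 E] [CompleteSpace E] (W : unitary (E →L[𝕜] E)) (u v : E) :
    ⟪u, (W : E →L[𝕜] E) v⟫_𝕜 = ⟪((W⁻¹ : unitary (E →L[𝕜] E)) : E →L[𝕜] E) u, v⟫_𝕜 := by
  rw [← Unitary.star_eq_inv, Unitary.coe_star, ContinuousLinearMap.star_eq_adjoint,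
    ContinuousLinearMap.adjoint_inner_left]

theorem lp.inner_eq_zero_of_forall_eq_zero_or_eq_zero {𝕜 ι : Type*} [RCLike 𝕜]
    {G : ι → Type*} [∀ i, NormedAddCommGroup (G i)] [∀ i, InnerProductSpace 𝕜 (G i)]
    {f g : lp G 2} (h : ∀ i, f i = 0 ∨ g i = 0) : ⟪f, g⟫_𝕜 = 0 := by
  rw [lp.inner_eq_tsum]
  exact (tsum_congr fun i => by rcases h i with h | h <;> simp [h]).trans tsum_zero

theorem card_coin (d : ℕ) : Fintype.card (Coin d) = 2 * d := by
  simp [mul_comm]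

theorem norm_jump_le (d : ℕ) (τ : Coin d) : ‖jump d τ‖ ≤ 1 := by
  refine (pi_norm_le_iff_of_nonneg zero_le_one).2 fun i => ?_
  simp only [jump, Pi.smul_apply, Pi.single_apply, smul_ite, smul_zero]
  split_ifs <;> simp

theorem sum_jump (d : ℕ) : ∑ τ : Coin d, jump d τ = 0 := by
  simp [jump, Fintype.sum_prod_type]

theorem inner_bv_left {d : ℕ} (σ : Coin d) (y : Site d) (φ : WalkH d) :
    ⟪bv d σ y, φ⟫_ℂ = φ (σ, y) := by
  simp [bv, lp.inner_single_left]

def displacement (d : ℕ) (π : Equiv.Perm (Coin d)) (τ : Coin d) (n : ℕ) : Site d :=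
  ∑ k ∈ range n, jump d ((π ^ (k + 1)) τ)

section Walk

variable {d : ℕ} {π : Equiv.Perm (Coin d)}

theorem norm_displacement_le (hπ : ∀ σ τ : Coin d, ∃ k < 2 * d, (π ^ k) τ = σ) (τ : Coin d)
    (n : ℕ) : ‖displacement d π τ n‖ ≤ 2 * d - 1 := by
  rw [← card_coin] at hπ
  have hperiodic : Function.Periodic (fun k => jump d ((π ^ (k + 1)) τ)) (2 * d) := fun k => by
    show jump d ((π ^ (k + 2 * d + 1)) τ) = jump d ((π ^ (k + 1)) τ)
    rw [add_right_comm, pow_add, ← card_coin,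
      Equiv.Perm.pow_card_eq_one_of_forall_exists_pow_apply_eq hπ, mul_one]
  have hperiod_sum : ∑ k ∈ range (2 * d), jump d ((π ^ (k + 1)) τ) = 0 := by
    simp_rw [pow_succ, Equiv.Perm.mul_apply, ← card_coin,
      Equiv.Perm.sum_range_card_pow_apply_of_forall_exists_pow_apply_eq hπ, sum_jump]
  have hmod : n % (2 * d) + 1 ≤ 2 * d := Nat.mod_lt n (by have := τ.1.pos; omega)
  calc ‖displacement d π τ n‖
      = ‖∑ k ∈ range (n % (2 * d)), jump d ((π ^ (k + 1)) τ)‖ := by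
        rw [displacement, hperiodic.sum_range_eq_sum_range_mod hperiod_sum]
    _ ≤ ∑ k ∈ range (n % (2 * d)), ‖jump d ((π ^ (k + 1)) τ)‖ := norm_sum_le _ _
    _ ≤ ∑ _k ∈ range (n % (2 * d)), (1 : ℝ) := sum_le_sum fun k _ => norm_jump_le d _
    _ = ((n % (2 * d) : ℕ) : ℝ) := by simp
    _ ≤ 2 * d - 1 := by
        have : ((n % (2 * d) : ℕ) : ℝ) + 1 ≤ 2 * d := by exact_mod_cast hmod
        linarith

theorem walk_apply_bv {D U : WalkH d →L[ℂ] WalkH d}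
    (hD : ∀ (τ : Coin d) (x : Site d), ∃ c : ℂ, D (bv d τ x) = c • bv d τ x)
    (hU : ∀ (σ : Coin d) (y : Site d),
      U (bv d σ y) = ∑ τ : Coin d, permCoin d π τ σ • bv d τ (y + jump d τ))
    (τ : Coin d) (x : Site d) :
    ∃ c : ℂ, (D * U) (bv d τ x) = c • bv d (π τ) (x + jump d (π τ)) := by
  have hUτ : U (bv d τ x) = bv d (π τ) (x + jump d (π τ)) := by
    simp [hU, permCoin, ite_smul]
  rw [mul_apply_eq_comp, hUτ]
  exact hD _ _

variable {T : WalkH d →L[ℂ] WalkH d}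

theorem pow_apply_bv
    (hT : ∀ (τ : Coin d) (x : Site d), ∃ c : ℂ, T (bv d τ x) = c • bv d (π τ) (x + jump d (π τ)))
    (n : ℕ) (τ : Coin d) (x : Site d) :
    ∃ c : ℂ, (T ^ n) (bv d τ x) = c • bv d ((π ^ n) τ) (x + displacement d π τ n) := by
  induction n with
  | zero => exact ⟨1, by simp [displacement]⟩
  | succ n ih =>
    obtain ⟨c, hc⟩ := ih
    obtain ⟨c', hc'⟩ := hT ((π ^ n) τ) (x + displacement d π τ n)
    refine ⟨c * c', ?_⟩
    rw [pow_succ', mul_apply_eq_comp, hc, map_smul, hc', smul_smul,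
      ← Equiv.Perm.mul_apply, ← pow_succ', displacement, displacement, sum_range_succ,
      add_assoc]

theorem inner_bv_pow_apply_bv_eq_zero (hπ : ∀ σ τ : Coin d, ∃ k < 2 * d, (π ^ k) τ = σ)
    (hT : ∀ (τ : Coin d) (x : Site d), ∃ c : ℂ, T (bv d τ x) = c • bv d (π τ) (x + jump d (π τ)))
    (n : ℕ) {τ σ : Coin d} {x y : Site d} (hxy : (2 * d - 1 : ℝ) < ‖y - x‖) :
    ⟪bv d σ y, (T ^ n) (bv d τ x)⟫_ℂ = 0 := by
  obtain ⟨c, hc⟩ := pow_apply_bv hT n τ x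
  have hy : (σ, y) ≠ ((π ^ n) τ, x + displacement d π τ n) := fun h => by
    rw [show y = _ from congrArg Prod.snd h, add_sub_cancel_left] at hxy
    exact (norm_displacement_le hπ τ n).not_gt hxy
  rw [hc, inner_smul_right, inner_bv_left, bv, lp.single_apply_ne 2 _ _ hy, mul_zero]

theorem inner_bv_zpow_apply_bv_eq_zero (hπ : ∀ σ τ : Coin d, ∃ k < 2 * d, (π ^ k) τ = σ)
    {W : unitary (WalkH d →L[ℂ] WalkH d)}
    (hW : ∀ (τ : Coin d) (x : Site d), ∃ c : ℂ,
      (W : WalkH d →L[ℂ] WalkH d) (bv d τ x) = c • bv d (π τ) (x + jump d (π τ)))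
    (n : ℤ) (τ : Coin d) (x : Site d) (σ : Coin d) (y : Site d)
    (hxy : (2 * d - 1 : ℝ) < ‖y - x‖) :
    ⟪bv d σ y, ((W ^ n : unitary (WalkH d →L[ℂ] WalkH d)) : WalkH d →L[ℂ] WalkH d)
      (bv d τ x)⟫_ℂ = 0 := by
  obtain ⟨m, rfl | rfl⟩ := n.eq_nat_or_neg
  · rw [zpow_natCast, SubmonoidClass.coe_pow]
    exact inner_bv_pow_apply_bv_eq_zero hπ hW m hxy
  · rw [inner_unitary_apply_right, ← zpow_neg, neg_neg, zpow_natCast, SubmonoidClass.coe_pow,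
      ← inner_conj_symm, inner_bv_pow_apply_bv_eq_zero hπ hW m (by rwa [← norm_neg, neg_sub]),
      map_zero]

end Walk

theorem fully_localized_walk_no_propagation_general (d : ℕ) (π : Equiv.Perm (Coin d))
    (hπ : ∀ σ τ : Coin d, ∃ k < 2 * d, (π ^ k) τ = σ)
    (W : unitary (WalkH d →L[ℂ] WalkH d))
    (D U : WalkH d →L[ℂ] WalkH d)
    (hW : (W : WalkH d →L[ℂ] WalkH d) = D * U)
    (hD : ∀ (τ : Coin d) (x : Site d), ∃ θ : ℝ,
      D (bv d τ x) = Complex.exp (Complex.I * θ) • bv d τ x)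
    (hU : ∀ (σ : Coin d) (y : Site d),
      U (bv d σ y) = ∑ τ : Coin d, permCoin d π τ σ • bv d τ (y + jump d τ)) :
    (∀ (n : ℤ) (τ : Coin d) (x : Site d) (σ : Coin d) (y : Site d),
      (2 * d - 1 : ℝ) < ‖y - x‖ →
      ⟪bv d σ y, ((W ^ n : unitary (WalkH d →L[ℂ] WalkH d)) :
        WalkH d →L[ℂ] WalkH d) (bv d τ x)⟫_ℂ = 0) ∧
    ∀ ψ : WalkH d,
      (∃ F : Finset (Site d), ∀ (σ : Coin d) (z : Site d), z ∉ F → ⟪bv d σ z, ψ⟫_ℂ = 0) →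
      ∃ F' : Finset (Site d), ∀ (n : ℤ) (σ : Coin d) (z : Site d), z ∉ F' →
        ⟪bv d σ z, ((W ^ n : unitary (WalkH d →L[ℂ] WalkH d)) :
          WalkH d →L[ℂ] WalkH d) ψ⟫_ℂ = 0 := by
  have hstep : ∀ (τ : Coin d) (x : Site d), ∃ c : ℂ,
      (W : WalkH d →L[ℂ] WalkH d) (bv d τ x) = c • bv d (π τ) (x + jump d (π τ)) := by
    rw [hW]
    exact walk_apply_bv (fun τ x => let ⟨_, h⟩ := hD τ x; ⟨_, h⟩) hU
  have hloc := inner_bv_zpow_apply_bv_eq_zero hπ hstep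
  refine ⟨hloc, fun ψ ⟨F, hF⟩ => ?_⟩
  have hfin : (⋃ w ∈ F, Metric.closedBall w (2 * d - 1 : ℝ)).Finite :=
    F.finite_toSet.biUnion fun w _ => (isCompact_closedBall w _).finite_of_discrete
  refine ⟨hfin.toFinset, fun n σ z hz => ?_⟩
  rw [inner_unitary_apply_right, ← zpow_neg]
  refine lp.inner_eq_zero_of_forall_eq_zero_or_eq_zero fun ⟨σ', z'⟩ => ?_
  simp only [← inner_bv_left]
  by_cases hz' : z' ∈ F
  · simp only [Set.Finite.mem_toFinset, Set.mem_iUnion, Metric.mem_closedBall, not_exists,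
      not_le] at hz
    exact .inl (hloc _ _ _ _ _ (by rw [← dist_eq_norm, dist_comm]; exact hz z' hz'))
  · exact .inr (hF σ' z' hz')

/-- the fully localized walk does not propagate: for all n ∈ ℤ,
W^n|τ,x⟩ is supported on sites y with |y−x| ≤ 2d−1, and any finitely supported
initial state stays supported in a fixed finite set of sites for all times. -/
theorem fully_localized_walk_no_propagation (d : ℕ) (hd : 1 ≤ d) (π : Equiv.Perm (Coin d))
    (hπ : ∀ σ τ : Coin d, ∃ k < 2 * d, (π ^ k) τ = σ)
    (W : unitary (WalkH d →L[ℂ] WalkH d))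
    (D U : WalkH d →L[ℂ] WalkH d)
    (hW : (W : WalkH d →L[ℂ] WalkH d) = D * U)
    (hD : ∀ (τ : Coin d) (x : Site d), ∃ θ : ℝ,
      D (bv d τ x) = Complex.exp (Complex.I * θ) • bv d τ x)
    (hU : ∀ (σ : Coin d) (y : Site d),
      U (bv d σ y) = ∑ τ : Coin d, permCoin d π τ σ • bv d τ (y + jump d τ)) :
    (∀ (n : ℤ) (τ : Coin d) (x : Site d) (σ : Coin d) (y : Site d),
      (2 * d - 1 : ℝ) < ‖y - x‖ →
      ⟪bv d σ y, ((W ^ n : unitary (WalkH d →L[ℂ] WalkH d)) :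
        WalkH d →L[ℂ] WalkH d) (bv d τ x)⟫_ℂ = 0) ∧
    ∀ ψ : WalkH d,
      (∃ F : Finset (Site d), ∀ (σ : Coin d) (z : Site d), z ∉ F → ⟪bv d σ z, ψ⟫_ℂ = 0) →
      ∃ F' : Finset (Site d), ∀ (n : ℤ) (σ : Coin d) (z : Site d), z ∉ F' →
        ⟪bv d σ z, ((W ^ n : unitary (WalkH d →L[ℂ] WalkH d)) :
          WalkH d →L[ℂ] WalkH d) ψ⟫_ℂ = 0 :=
  fully_localized_walk_no_propagation_general d π hπ W D U hW hD hU
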